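/- Let A be an online paging policy satisfying the eviction hypothesis with parameter c ≥ 1. Then A is c-competitive: for every online paging policy B started from the same initial cache and every horizon T, E[cost(A, T)] ≤ c · E[cost(B, T)]. -/
import Mathlib


open Finset

/-! ## The Markov paging model

Pages are `Fin n`.  Requests are drawn from a time-homogeneous Markov chain with
row-stochastic transition matrix `M` and a fixed initial distribution `init`.
An online paging policy is given by its (randomized) eviction rule: on a cache miss,
`pol hist cache p` is the probability of evicting page `p`, where `hist` is the list
of requests seen so far (most recent first, the current — missed — request at the head)
and `cache` is the current cache. -/

/-- A (randomized) online paging policy: given the request history (most recent first,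
the current request at the head) and the current cache, the probability of evicting
each page. -/
abbrev Policy (n : ℕ) := List (Fin n) → Finset (Fin n) → Fin n → ℝ

/-- `M` is a row-stochastic transition matrix. -/
def IsStochastic {n : ℕ} (M : Fin n → Fin n → ℝ) : Prop :=
  ∀ i, (∀ j, 0 ≤ M i j) ∧ (∑ j, M i j) = 1

/-- `μ` is a probability distribution on the pages. -/
def IsDist {n : ℕ} (μ : Fin n → ℝ) : Prop :=
  (∀ i, 0 ≤ μ i) ∧ (∑ i, μ i) = 1

/-- Validity of a policy for cache size `k`: on any (size-`k`) cache, the eviction rule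
is a probability distribution supported on the cache. -/
def IsPolicy {n : ℕ} (k : ℕ) (pol : Policy n) : Prop :=
  ∀ (hist : List (Fin n)) (cache : Finset (Fin n)), cache.card = k →
    (∀ p, 0 ≤ pol hist cache p) ∧ (∀ p, p ∉ cache → pol hist cache p = 0) ∧
      (∑ p ∈ cache, pol hist cache p) = 1

/-- Expected number of misses of policy `pol` on the next `T` requests, where the next
request is drawn from `dist`, the history so far is `hist` and the current cache is
`cache`.  On a hit the cache is unchanged; on a miss the policy pays `1`, evicts a page
`p` with probability `pol (x :: hist) cache p` and brings the requested page in. -/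
noncomputable def runAux {n : ℕ} (M : Fin n → Fin n → ℝ) (pol : Policy n) :
    ℕ → (Fin n → ℝ) → List (Fin n) → Finset (Fin n) → ℝ
  | 0, _, _, _ => 0
  | T + 1, dist, hist, cache =>
      ∑ x : Fin n, dist x *
        (if x ∈ cache then runAux M pol T (M x) (x :: hist) cache
         else 1 + ∑ p ∈ cache, pol (x :: hist) cache p *
              runAux M pol T (M x) (x :: hist) (insert x (cache.erase p)))

/-- `E[cost(pol, T)]`: the expected number of cache misses of policy `pol` during the
first `T` requests of the Markov chain `(M, init)`, starting from cache `cache`. -/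
noncomputable def expCost {n : ℕ} (M : Fin n → Fin n → ℝ) (init : Fin n → ℝ)
    (pol : Policy n) (cache : Finset (Fin n)) (T : ℕ) : ℝ :=
  runAux M pol T init [] cache

/-- Probability that, within the next `T` steps of the chain currently at `s`, page `p`
is requested strictly before page `q` (a request to `q` — in particular `p = q` — stops
the process with failure). -/
noncomputable def alphaAux {n : ℕ} (M : Fin n → Fin n → ℝ) (p q : Fin n) :
    ℕ → Fin n → ℝ
  | 0, _ => 0
  | T + 1, s =>
      ∑ x : Fin n, M s x *
        (if x = q then 0 else if x = p then 1 else alphaAux M p q T x)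

/-- `α(p<q|s)`: the probability that, for the chain started at `s`, the first subsequent
request to `p` occurs strictly before the first subsequent request to `q`; in particular
`α(p<p|s) = 0`. -/
noncomputable def alphaProb {n : ℕ} (M : Fin n → Fin n → ℝ) (p q s : Fin n) : ℝ :=
  ⨆ T : ℕ, alphaAux M p q T s

/-- The eviction hypothesis with parameter `c`: `pol` is a valid policy and, whenever it
suffers a cache miss (most recent request `s`, current cache `cache`), the page it
evicts is drawn from a distribution such that for every page `q` of the cache, the
probability — over the evicted page `p` and the future requests of the chain
conditioned on `s` — that the first subsequent request to `q` occurs no later than the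
first subsequent request to `p` (that probability being `∑_p pol p · (1 − α(p<q|s))`)
is at least `1/c`. -/
def EvictionHyp {n : ℕ} (k : ℕ) (M : Fin n → Fin n → ℝ) (pol : Policy n) (c : ℝ) :
    Prop :=
  IsPolicy k pol ∧
    ∀ (s : Fin n) (hist : List (Fin n)) (cache : Finset (Fin n)),
      cache.card = k → s ∉ cache →
        ∀ q ∈ cache,
          1 / c ≤ ∑ p ∈ cache, pol (s :: hist) cache p * (1 - alphaProb M p q s)

section Alpha

variable {n : ℕ} {M : Fin n → Fin n → ℝ}

lemma alphaAux_nonneg (hM : IsStochastic M) (p q : Fin n) :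
    ∀ T s, 0 ≤ alphaAux M p q T s := by
  intro T
  induction T with
  | zero => intro s; simp [alphaAux]
  | succ T ih =>
    intro s
    rw [alphaAux]
    apply Finset.sum_nonneg
    intro x _
    apply mul_nonneg ((hM s).1 x)
    split_ifs with h1 h2
    · exact le_rfl
    · exact zero_le_one
    · exact ih x

lemma alphaAux_le_one (hM : IsStochastic M) (p q : Fin n) :
    ∀ T s, alphaAux M p q T s ≤ 1 := by
  intro T
  induction T with
  | zero => intro s; simp [alphaAux]
  | succ T ih =>
    intro s
    rw [alphaAux]
    calc ∑ x, M s x * (if x = q then 0 else if x = p then 1 else alphaAux M p q T x)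
        ≤ ∑ x, M s x * 1 := by
          apply Finset.sum_le_sum
          intro x _
          apply mul_le_mul_of_nonneg_left _ ((hM s).1 x)
          split_ifs
          · exact zero_le_one
          · exact le_rfl
          · exact ih x
      _ = 1 := by simp [(hM s).2]

lemma alphaAux_succ_le (hM : IsStochastic M) (p q : Fin n) :
    ∀ T s, alphaAux M p q T s ≤ alphaAux M p q (T + 1) s := by
  intro T
  induction T with
  | zero => intro s; simpa [alphaAux] using alphaAux_nonneg hM p q 1 s
  | succ T ih =>
    intro s
    rw [alphaAux, alphaAux]
    apply Finset.sum_le_sum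
    intro x _
    apply mul_le_mul_of_nonneg_left _ ((hM s).1 x)
    split_ifs
    · exact le_rfl
    · exact le_rfl
    · exact ih x

lemma alphaAux_mono (hM : IsStochastic M) (p q s : Fin n) :
    Monotone (fun T => alphaAux M p q T s) :=
  monotone_nat_of_le_succ (fun T => alphaAux_succ_le hM p q T s)

lemma alphaAux_bdd (hM : IsStochastic M) (p q s : Fin n) :
    BddAbove (Set.range fun T => alphaAux M p q T s) := by
  refine ⟨1, ?_⟩
  rintro _ ⟨T, rfl⟩
  exact alphaAux_le_one hM p q T s

lemma alphaAux_le_alphaProb (hM : IsStochastic M) (p q : Fin n) (T : ℕ) (s : Fin n) :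
    alphaAux M p q T s ≤ alphaProb M p q s :=
  le_ciSup (alphaAux_bdd hM p q s) T

lemma alphaProb_nonneg (hM : IsStochastic M) (p q s : Fin n) :
    0 ≤ alphaProb M p q s := by
  have := alphaAux_le_alphaProb hM p q 0 s
  simpa [alphaAux] using this

lemma alphaProb_le_one (hM : IsStochastic M) (p q s : Fin n) :
    alphaProb M p q s ≤ 1 :=
  ciSup_le (fun T => alphaAux_le_one hM p q T s)

lemma alphaProb_tendsto (hM : IsStochastic M) (p q s : Fin n) :
    Filter.Tendsto (fun T => alphaAux M p q T s) Filter.atTop (nhds (alphaProb M p q s)) :=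
  tendsto_atTop_ciSup (alphaAux_mono hM p q s) (alphaAux_bdd hM p q s)

lemma alphaProb_fix (hM : IsStochastic M) (p q s : Fin n) :
    alphaProb M p q s
      = ∑ x, M s x * (if x = q then 0 else if x = p then 1 else alphaProb M p q x) := by
  have h2 : Filter.Tendsto (fun T => alphaAux M p q (T + 1) s) Filter.atTop
      (nhds (alphaProb M p q s)) :=
    (alphaProb_tendsto hM p q s).comp (Filter.tendsto_add_atTop_nat 1)
  have h3 : Filter.Tendsto
      (fun T => ∑ x, M s x * (if x = q then 0 else if x = p then 1 else alphaAux M p q T x))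
      Filter.atTop
      (nhds (∑ x, M s x * (if x = q then 0 else if x = p then 1 else alphaProb M p q x))) := by
    apply tendsto_finset_sum
    intro x _
    split_ifs
    · exact tendsto_const_nhds
    · exact tendsto_const_nhds
    · exact (alphaProb_tendsto hM p q x).const_mul _
  have h4 : (fun T => alphaAux M p q (T + 1) s)
      = fun T => ∑ x, M s x * (if x = q then 0 else if x = p then 1 else alphaAux M p q T x) := by
    funext T; rw [alphaAux]
  rw [h4] at h2
  exact tendsto_nhds_unique h2 h3

lemma alphaProb_triangle (hM : IsStochastic M) (p r q s : Fin n) :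
    alphaProb M p q s ≤ alphaProb M p r s + alphaProb M r q s := by
  have key : ∀ T s, alphaAux M p q T s ≤ alphaProb M p r s + alphaProb M r q s := by
    intro T
    induction T with
    | zero =>
      intro s; simp only [alphaAux]
      have := alphaProb_nonneg hM p r s
      have := alphaProb_nonneg hM r q s
      linarith
    | succ T ih =>
      intro s
      rw [alphaAux, alphaProb_fix hM p r s, alphaProb_fix hM r q s, ← Finset.sum_add_distrib]
      apply Finset.sum_le_sum
      intro x _
      rw [← mul_add]
      apply mul_le_mul_of_nonneg_left _ ((hM s).1 x)
      have b1 := alphaProb_nonneg hM p r x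
      have b2 := alphaProb_nonneg hM r q x
      have b3 := alphaAux_le_one hM p q T x
      have b4 := alphaAux_nonneg hM p q T x
      have b5 := ih x
      split_ifs <;> linarith
  exact ciSup_le (fun T => key T s)

end Alpha
section Helpers

variable {n : ℕ} {M : Fin n → Fin n → ℝ}

/-- One-step averaged version of `alphaProb` w.r.t. an arbitrary distribution. -/
noncomputable def abar (M : Fin n → Fin n → ℝ) (p q : Fin n) (dist : Fin n → ℝ) : ℝ :=
  ∑ x, dist x * (if x = q then 0 else if x = p then 1 else alphaProb M p q x)

lemma abar_nonneg (hM : IsStochastic M) (p q : Fin n) {dist : Fin n → ℝ}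
    (hd0 : ∀ x, 0 ≤ dist x) : 0 ≤ abar M p q dist := by
  apply Finset.sum_nonneg
  intro x _
  apply mul_nonneg (hd0 x)
  split_ifs
  · exact le_rfl
  · exact zero_le_one
  · exact alphaProb_nonneg hM p q x

lemma abar_Mx (hM : IsStochastic M) (p q s : Fin n) :
    abar M p q (M s) = alphaProb M p q s := (alphaProb_fix hM p q s).symm

lemma card_insert_erase {S : Finset (Fin n)} {x p : Fin n} (hx : x ∉ S) (hp : p ∈ S) :
    (insert x (S.erase p)).card = S.card := by
  rw [Finset.card_insert_of_notMem (fun h => hx (Finset.mem_of_mem_erase h)),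
    Finset.card_erase_of_mem hp]
  exact Nat.sub_add_cancel (Finset.card_pos.2 ⟨p, hp⟩)

variable {CA CB : Finset (Fin n)} {x p' q' : Fin n} {m : Fin n → Fin n}

lemma helper_mem (hxA : x ∉ CA) (hxq : x ∈ CB → x = q') (a : Fin n) :
    a ∈ insert x (CB.erase q') \ insert x (CA.erase p') ↔
      a ∈ CB ∧ a ≠ q' ∧ (a = p' ∨ a ∉ CA) := by
  simp only [Finset.mem_sdiff, Finset.mem_insert, Finset.mem_erase, not_or]
  constructor
  · rintro ⟨h1, hax, h2⟩
    rcases h1 with rfl | ⟨haq, haB⟩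
    · exact absurd rfl hax
    · refine ⟨haB, haq, ?_⟩
      by_cases hap : a = p'
      · exact Or.inl hap
      · exact Or.inr fun haA => h2 ⟨hap, haA⟩
  · rintro ⟨haB, haq, hor⟩
    have hax : a ≠ x := fun h => haq (by rw [h]; exact hxq (h ▸ haB))
    refine ⟨Or.inr ⟨haq, haB⟩, hax, ?_⟩
    rintro ⟨hap, haA⟩
    rcases hor with rfl | h
    · exact hap rfl
    · exact h haA

lemma helper_set (hxA : x ∉ CA) (hxq : x ∈ CB → x = q') :
    insert x (CB.erase q') \ insert x (CA.erase p')
      = if p' ∈ CB ∧ p' ≠ q' then insert p' ((CB \ CA).erase q')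
        else (CB \ CA).erase q' := by
  ext a
  rw [helper_mem hxA hxq]
  split_ifs with hb
  · simp only [Finset.mem_insert, Finset.mem_erase, Finset.mem_sdiff]
    constructor
    · rintro ⟨haB, haq, hor⟩
      rcases hor with rfl | h
      · exact Or.inl rfl
      · exact Or.inr ⟨haq, haB, h⟩
    · rintro (rfl | ⟨haq, haB, h⟩)
      · exact ⟨hb.1, hb.2, Or.inl rfl⟩
      · exact ⟨haB, haq, Or.inr h⟩
  · simp only [Finset.mem_erase, Finset.mem_sdiff]
    constructor
    · rintro ⟨haB, haq, hor⟩
      rcases hor with rfl | h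
      · exact absurd ⟨haB, haq⟩ hb
      · exact ⟨haq, haB, h⟩
    · rintro ⟨haq, haB, h⟩
      exact ⟨haB, haq, Or.inr h⟩

lemma helper_w_mem (hq' : q' ∈ CB) (hmap : ∀ p ∈ CB \ CA, m p ∈ CA \ CB) :
    (if q' ∈ CA then q' else m q') ∈ CA := by
  split_ifs with h
  · exact h
  · exact (Finset.mem_sdiff.1 (hmap q' (Finset.mem_sdiff.2 ⟨hq', h⟩))).1

lemma helper_map (hmap : ∀ p ∈ CB \ CA, m p ∈ CA \ CB)
    (hinj : ∀ p ∈ CB \ CA, ∀ r ∈ CB \ CA, m p = m r → p = r)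
    (hxA : x ∉ CA) (hp' : p' ∈ CA) (hq' : q' ∈ CB) (hxq : x ∈ CB → x = q') :
    ∀ p ∈ insert x (CB.erase q') \ insert x (CA.erase p'),
      (if p = p' ∨ m p = p' then (if q' ∈ CA then q' else m q') else m p)
        ∈ insert x (CA.erase p') \ insert x (CB.erase q') := by
  intro p hp
  rw [helper_mem hxA hxq] at hp
  obtain ⟨hpB, hpq, hpor⟩ := hp
  set w := if q' ∈ CA then q' else m q' with hw
  have hwA : w ∈ CA := helper_w_mem hq' hmap
  have hwx : w ≠ x := fun h => hxA (h ▸ hwA)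
  have hwB' : w ∉ CB.erase q' := by
    rw [hw]; split_ifs with h
    · simp
    · have := (Finset.mem_sdiff.1 (hmap q' (Finset.mem_sdiff.2 ⟨hq', h⟩))).2
      exact fun hc => this (Finset.mem_of_mem_erase hc)
  simp only [Finset.mem_sdiff, Finset.mem_insert, Finset.mem_erase, not_or]
  split_ifs with hbr
  · -- value is w; need w ≠ p'
    have hwp' : w ≠ p' := by
      by_cases hpp : p = p'
      · -- p' = p ∈ CB and p' ≠ q'
        subst hpp
        rw [hw]; split_ifs with h
        · exact fun hc => hpq hc.symm
        · have := (Finset.mem_sdiff.1 (hmap q' (Finset.mem_sdiff.2 ⟨hq', h⟩))).2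
          exact fun hc => this (hc ▸ hpB)
      · -- m p = p', p ∉ CA, so p' ∉ CB
        have hmp : m p = p' := hbr.resolve_left hpp
        have hpA : p ∉ CA := hpor.resolve_left hpp
        have hpSA : p ∈ CB \ CA := Finset.mem_sdiff.2 ⟨hpB, hpA⟩
        have hp'nB : p' ∉ CB := hmp ▸ (Finset.mem_sdiff.1 (hmap p hpSA)).2
        rw [hw]; split_ifs with h
        · exact fun hc => hp'nB (hc ▸ hq')
        · intro hc
          have hq'SA : q' ∈ CB \ CA := Finset.mem_sdiff.2 ⟨hq', h⟩
          have := hinj q' hq'SA p hpSA (by rw [hc, hmp])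
          exact hpq this.symm
    exact ⟨Or.inr ⟨hwp', hwA⟩, hwx, fun hc => hwB' (Finset.mem_erase.2 hc)⟩
  · push_neg at hbr
    have hpA : p ∉ CA := hpor.resolve_left hbr.1
    have hpSA : p ∈ CB \ CA := Finset.mem_sdiff.2 ⟨hpB, hpA⟩
    obtain ⟨hmA, hmB⟩ := Finset.mem_sdiff.1 (hmap p hpSA)
    have hmx : m p ≠ x := fun h => hxA (h ▸ hmA)
    exact ⟨Or.inr ⟨hbr.2, hmA⟩, hmx, fun hc => hmB hc.2⟩

lemma helper_inj (hmap : ∀ p ∈ CB \ CA, m p ∈ CA \ CB)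
    (hinj : ∀ p ∈ CB \ CA, ∀ r ∈ CB \ CA, m p = m r → p = r)
    (hxA : x ∉ CA) (hp' : p' ∈ CA) (hq' : q' ∈ CB) (hxq : x ∈ CB → x = q') :
    ∀ p ∈ insert x (CB.erase q') \ insert x (CA.erase p'),
      ∀ r ∈ insert x (CB.erase q') \ insert x (CA.erase p'),
      (if p = p' ∨ m p = p' then (if q' ∈ CA then q' else m q') else m p)
        = (if r = p' ∨ m r = p' then (if q' ∈ CA then q' else m q') else m r) → p = r := by
  intro p hp r hr heq
  rw [helper_mem hxA hxq] at hp hr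
  obtain ⟨hpB, hpq, hpor⟩ := hp
  obtain ⟨hrB, hrq, hror⟩ := hr
  set w := if q' ∈ CA then q' else m q' with hw
  -- generic fact: cross case is impossible
  have cross : ∀ a : Fin n, a ∈ CB → a ≠ q' → a ∉ CA → ¬(m a = p') → w ≠ m a := by
    intro a haB haq haA hma hc
    have haSA : a ∈ CB \ CA := Finset.mem_sdiff.2 ⟨haB, haA⟩
    obtain ⟨hmA, hmB⟩ := Finset.mem_sdiff.1 (hmap a haSA)
    rw [hw] at hc
    split_ifs at hc with h
    · exact hmB (hc ▸ hq')
    · have hq'SA : q' ∈ CB \ CA := Finset.mem_sdiff.2 ⟨hq', h⟩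
      exact haq (hinj q' hq'SA a haSA hc).symm
  split_ifs at heq with hbp hbr hbr
  · -- both redirected: show p = r
    by_cases hpp : p = p'
    · by_cases hrr : r = p'
      · rw [hpp, hrr]
      · -- r ∉ CA, m r = p' = p ∈ CB : contradiction
        have hmr : m r = p' := hbr.resolve_left hrr
        have hrA : r ∉ CA := hror.resolve_left hrr
        have hrSA : r ∈ CB \ CA := Finset.mem_sdiff.2 ⟨hrB, hrA⟩
        have := (Finset.mem_sdiff.1 (hmap r hrSA)).2
        exact absurd (hmr ▸ (hpp ▸ hpB)) this
    · have hmp : m p = p' := hbp.resolve_left hpp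
      by_cases hrr : r = p'
      · have hpA : p ∉ CA := hpor.resolve_left hpp
        have hpSA : p ∈ CB \ CA := Finset.mem_sdiff.2 ⟨hpB, hpA⟩
        have := (Finset.mem_sdiff.1 (hmap p hpSA)).2
        exact absurd (hmp ▸ (hrr ▸ hrB)) this
      · have hmr : m r = p' := hbr.resolve_left hrr
        have hpA : p ∉ CA := hpor.resolve_left hpp
        have hrA : r ∉ CA := hror.resolve_left hrr
        exact hinj p (Finset.mem_sdiff.2 ⟨hpB, hpA⟩) r (Finset.mem_sdiff.2 ⟨hrB, hrA⟩)
          (by rw [hmp, hmr])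
  · -- p redirected, r not: contradiction
    push_neg at hbr
    have hrA : r ∉ CA := hror.resolve_left hbr.1
    exact absurd heq (cross r hrB hrq hrA hbr.2)
  · push_neg at hbp
    have hpA : p ∉ CA := hpor.resolve_left hbp.1
    exact absurd heq.symm (cross p hpB hpq hpA hbp.2)
  · push_neg at hbp
    have hpA : p ∉ CA := hpor.resolve_left hbp.1
    push_neg at hbr
    have hrA : r ∉ CA := hror.resolve_left hbr.1
    exact hinj p (Finset.mem_sdiff.2 ⟨hpB, hpA⟩) r (Finset.mem_sdiff.2 ⟨hrB, hrA⟩) heq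

lemma helper_sum (hM : IsStochastic M) (hmap : ∀ p ∈ CB \ CA, m p ∈ CA \ CB)
    (hinj : ∀ p ∈ CB \ CA, ∀ r ∈ CB \ CA, m p = m r → p = r)
    (hxA : x ∉ CA) (hp' : p' ∈ CA) (hq' : q' ∈ CB) (hxq : x ∈ CB → x = q') :
    ∑ p ∈ insert x (CB.erase q') \ insert x (CA.erase p'),
      alphaProb M p (if p = p' ∨ m p = p' then (if q' ∈ CA then q' else m q') else m p) x
    ≤ (∑ p ∈ (CB \ CA).erase q', alphaProb M p (m p) x)
        + alphaProb M p' (if q' ∈ CA then q' else m q') x := by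
  set w := if q' ∈ CA then q' else m q' with hw
  rw [helper_set hxA hxq]
  split_ifs with hb
  · have hp'nE : p' ∉ (CB \ CA).erase q' := fun h =>
      (Finset.mem_sdiff.1 (Finset.mem_of_mem_erase h)).2 hp'
    rw [Finset.sum_insert hp'nE]
    have h1 : (if p' = p' ∨ m p' = p' then w else m p') = w := by
      rw [if_pos (Or.inl rfl)]
    have h2 : ∀ p ∈ (CB \ CA).erase q',
        (if p = p' ∨ m p = p' then w else m p) = m p := by
      intro p hp
      simp only [Finset.mem_erase, Finset.mem_sdiff] at hp
      rw [if_neg]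
      push_neg
      constructor
      · exact fun h => hp.2.2 (h ▸ hp')
      · intro h
        exact (Finset.mem_sdiff.1 (hmap p (Finset.mem_sdiff.2 hp.2))).2 (by rw [h]; exact hb.1)
    rw [h1, Finset.sum_congr rfl (fun p hp => by rw [h2 p hp])]
    linarith
  · by_cases hex : ∃ p₃ ∈ (CB \ CA).erase q', m p₃ = p'
    · obtain ⟨p₃, hp₃E, hmp₃⟩ := hex
      have hp₃SA : p₃ ∈ CB \ CA := Finset.mem_of_mem_erase hp₃E
      rw [← Finset.add_sum_erase _ _ hp₃E,
        ← Finset.add_sum_erase _ (fun p => alphaProb M p (m p) x) hp₃E]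
      have h1 : (if p₃ = p' ∨ m p₃ = p' then w else m p₃) = w := by
        rw [if_pos (Or.inr hmp₃)]
      have h2 : ∀ p ∈ ((CB \ CA).erase q').erase p₃,
          (if p = p' ∨ m p = p' then w else m p) = m p := by
        intro p hp
        have hpE : p ∈ (CB \ CA).erase q' := Finset.mem_of_mem_erase hp
        have hpne : p ≠ p₃ := (Finset.mem_erase.1 hp).1
        have hpSA : p ∈ CB \ CA := Finset.mem_of_mem_erase hpE
        rw [if_neg]
        push_neg
        constructor
        · exact fun h => (Finset.mem_sdiff.1 hpSA).2 (h ▸ hp')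
        · intro h
          exact hpne (hinj p hpSA p₃ hp₃SA (by rw [h, hmp₃]))
      rw [h1, Finset.sum_congr rfl (fun p hp => by rw [h2 p hp])]
      have htri : alphaProb M p₃ w x ≤ alphaProb M p₃ (m p₃) x + alphaProb M p' w x := by
        have t := alphaProb_triangle hM p₃ p' w x
        have e : alphaProb M p₃ (m p₃) x = alphaProb M p₃ p' x := by rw [hmp₃]
        linarith
      linarith
    · push_neg at hex
      have h2 : ∀ p ∈ (CB \ CA).erase q',
          (if p = p' ∨ m p = p' then w else m p) = m p := by
        intro p hp
        have hpSA : p ∈ CB \ CA := Finset.mem_of_mem_erase hp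
        rw [if_neg]
        push_neg
        exact ⟨fun h => (Finset.mem_sdiff.1 hpSA).2 (h ▸ hp'), hex p hp⟩
      rw [Finset.sum_congr rfl (fun p hp => by rw [h2 p hp])]
      have := alphaProb_nonneg hM p' w x
      linarith

end Helpers
section Main

variable {n k : ℕ} {M : Fin n → Fin n → ℝ}

lemma hyp_bound {c : ℝ} {A : Policy n} (hA : EvictionHyp k M A c)
    (hist : List (Fin n)) {CA : Finset (Fin n)} (hCA : CA.card = k)
    {x : Fin n} (hxA : x ∉ CA) {q : Fin n} (hq : q ∈ CA) :
    ∑ p ∈ CA, A (x :: hist) CA p * alphaProb M p q x ≤ 1 - 1 / c := by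
  have h1 := hA.2 x hist CA hCA hxA q hq
  have h2 := (hA.1 (x :: hist) CA hCA).2.2
  have h3 : ∑ p ∈ CA, A (x :: hist) CA p * (1 - alphaProb M p q x)
      = (∑ p ∈ CA, A (x :: hist) CA p) - ∑ p ∈ CA, A (x :: hist) CA p * alphaProb M p q x := by
    rw [← Finset.sum_sub_distrib]
    exact Finset.sum_congr rfl (fun p _ => by ring)
  rw [h3, h2] at h1
  linarith

lemma main_lemma (hM : IsStochastic M) {c : ℝ} (hc : 1 ≤ c) {A B : Policy n}
    (hA : EvictionHyp k M A c) (hB : IsPolicy k B) :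
    ∀ (T : ℕ) (dist : Fin n → ℝ), (∀ x, 0 ≤ dist x) → (∑ x, dist x) = 1 →
    ∀ (hist : List (Fin n)) (CA CB : Finset (Fin n)), CA.card = k → CB.card = k →
    ∀ (m : Fin n → Fin n), (∀ p ∈ CB \ CA, m p ∈ CA \ CB) →
      (∀ p ∈ CB \ CA, ∀ r ∈ CB \ CA, m p = m r → p = r) →
    runAux M A T dist hist CA ≤ c * runAux M B T dist hist CB
      + c * ∑ p ∈ CB \ CA, abar M p (m p) dist := by
  have hc0 : (0:ℝ) < c := lt_of_lt_of_le one_pos hc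
  intro T
  induction T with
  | zero =>
    intro dist hd0 _ hist CA CB _ _ m _ _
    simp only [runAux]
    have h1 : 0 ≤ ∑ p ∈ CB \ CA, abar M p (m p) dist :=
      Finset.sum_nonneg (fun p _ => abar_nonneg hM p (m p) hd0)
    nlinarith
  | succ T ih =>
    intro dist hd0 hd1 hist CA CB hCA hCB m hmap hinj
    -- the pointwise branch inequality
    have key : ∀ x : Fin n,
        (if x ∈ CA then runAux M A T (M x) (x :: hist) CA
         else 1 + ∑ p' ∈ CA, A (x :: hist) CA p' *
            runAux M A T (M x) (x :: hist) (insert x (CA.erase p')))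
        ≤ c * (if x ∈ CB then runAux M B T (M x) (x :: hist) CB
         else 1 + ∑ q' ∈ CB, B (x :: hist) CB q' *
            runAux M B T (M x) (x :: hist) (insert x (CB.erase q')))
        + c * ∑ p ∈ CB \ CA,
            (if x = m p then 0 else if x = p then 1 else alphaProb M p (m p) x) := by
      intro x
      have hMx0 : ∀ y, 0 ≤ M x y := (hM x).1
      have hMx1 : (∑ y, M x y) = 1 := (hM x).2
      have hApol := hA.1 (x :: hist) CA hCA
      have hBpol := hB (x :: hist) CB hCB
      by_cases hxA : x ∈ CA <;> by_cases hxB : x ∈ CB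
      · -- both hit
        rw [if_pos hxA, if_pos hxB]
        have h := ih (M x) hMx0 hMx1 (x :: hist) CA CB hCA hCB m hmap hinj
        have heq : ∑ p ∈ CB \ CA, abar M p (m p) (M x)
            = ∑ p ∈ CB \ CA,
                (if x = m p then 0 else if x = p then 1 else alphaProb M p (m p) x) := by
          apply Finset.sum_congr rfl
          intro p hp
          rw [abar_Mx hM]
          obtain ⟨hpB, hpA⟩ := Finset.mem_sdiff.1 hp
          obtain ⟨hmA, hmB⟩ := Finset.mem_sdiff.1 (hmap p hp)
          rw [if_neg (fun h : x = m p => hmB (h ▸ hxB)),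
            if_neg (fun h : x = p => hpA (h ▸ hxA))]
        rw [heq] at h
        exact h
      · -- A hits, B misses : x ∈ CA \ CB
        rw [if_pos hxA, if_neg hxB]
        -- surjectivity of m
        have himg : Finset.image m (CB \ CA) = CA \ CB := by
          apply Finset.eq_of_subset_of_card_le
          · intro a ha
            obtain ⟨p, hp, rfl⟩ := Finset.mem_image.1 ha
            exact hmap p hp
          · rw [Finset.card_image_of_injOn
              (fun p hp r hr h => hinj p (Finset.mem_coe.1 hp) r (Finset.mem_coe.1 hr) h)]
            exact le_of_eq (Finset.card_sdiff_comm (hCA.trans hCB.symm))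
        obtain ⟨p₀, hp₀SA, hmp₀⟩ : ∃ p₀ ∈ CB \ CA, m p₀ = x := by
          have : x ∈ Finset.image m (CB \ CA) := by
            rw [himg]; exact Finset.mem_sdiff.2 ⟨hxA, hxB⟩
          exact Finset.mem_image.1 this
        have hSφ : ∑ p ∈ CB \ CA,
              (if x = m p then 0 else if x = p then 1 else alphaProb M p (m p) x)
            = ∑ p ∈ (CB \ CA).erase p₀, alphaProb M p (m p) x := by
          rw [← Finset.add_sum_erase _ _ hp₀SA, if_pos hmp₀.symm, zero_add]
          apply Finset.sum_congr rfl
          intro p hp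
          obtain ⟨hpne, hpSA⟩ := Finset.mem_erase.1 hp
          rw [if_neg, if_neg]
          · exact fun h : x = p => (Finset.mem_sdiff.1 hpSA).2 (h ▸ hxA)
          · intro h
            exact hpne (hinj p hpSA p₀ hp₀SA (by rw [← h, hmp₀]))
        suffices h : ∀ q' ∈ CB, runAux M A T (M x) (x :: hist) CA
            ≤ c * runAux M B T (M x) (x :: hist) (insert x (CB.erase q')) + c
              + c * ∑ p ∈ (CB \ CA).erase p₀, alphaProb M p (m p) x by
          rw [hSφ]
          have hstep : runAux M A T (M x) (x :: hist) CA
              = ∑ q' ∈ CB, B (x :: hist) CB q' * runAux M A T (M x) (x :: hist) CA := by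
            rw [← Finset.sum_mul, hBpol.2.2, one_mul]
          rw [hstep]
          have hle : ∑ q' ∈ CB, B (x :: hist) CB q' * runAux M A T (M x) (x :: hist) CA
              ≤ ∑ q' ∈ CB, B (x :: hist) CB q' *
                  (c * runAux M B T (M x) (x :: hist) (insert x (CB.erase q')) + c
                    + c * ∑ p ∈ (CB \ CA).erase p₀, alphaProb M p (m p) x) :=
            Finset.sum_le_sum (fun q' hq' =>
              mul_le_mul_of_nonneg_left (h q' hq') (hBpol.1 q'))
          refine le_trans hle (le_of_eq ?_)
          rw [Finset.sum_congr rfl (fun q' (_ : q' ∈ CB) => mul_add (B (x :: hist) CB q') _ _),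
            Finset.sum_add_distrib, ← Finset.sum_mul, hBpol.2.2, one_mul]
          rw [Finset.sum_congr rfl (fun q' (_ : q' ∈ CB) => mul_add (B (x :: hist) CB q') _ _),
            Finset.sum_add_distrib, ← Finset.sum_mul, hBpol.2.2, one_mul]
          rw [Finset.mul_sum]
          rw [Finset.sum_congr rfl (fun q' (_ : q' ∈ CB) => by ring :
            ∀ q' ∈ CB, B (x :: hist) CB q' *
              (c * runAux M B T (M x) (x :: hist) (insert x (CB.erase q')))
              = c * (B (x :: hist) CB q' *
                  runAux M B T (M x) (x :: hist) (insert x (CB.erase q'))))]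
          rw [← Finset.mul_sum]
          ring
        intro q' hq'
        have hCB' : (insert x (CB.erase q')).card = k := by
          rw [card_insert_erase hxB hq']; exact hCB
        have hSA' : insert x (CB.erase q') \ CA = (CB \ CA).erase q' := by
          ext a
          simp only [Finset.mem_sdiff, Finset.mem_insert, Finset.mem_erase]
          constructor
          · rintro ⟨rfl | ⟨haq, haB⟩, haA⟩
            · exact absurd hxA haA
            · exact ⟨haq, haB, haA⟩
          · rintro ⟨haq, haB, haA⟩
            exact ⟨Or.inr ⟨haq, haB⟩, haA⟩
        set v := if q' ∈ CA then q' else m q' with hv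
        have hvA : v ∈ CA := helper_w_mem hq' hmap
        have hm' : ∀ p ∈ (CB \ CA).erase q',
            (fun p => if p = p₀ then v else m p) p ∈ CA \ insert x (CB.erase q') := by
          intro p hp
          obtain ⟨hpq, hpSA⟩ := Finset.mem_erase.1 hp
          show (if p = p₀ then v else m p) ∈ CA \ insert x (CB.erase q')
          by_cases hpp : p = p₀
          · rw [if_pos hpp]
            refine Finset.mem_sdiff.2 ⟨hvA, fun hmem => ?_⟩
            rcases Finset.mem_insert.1 hmem with h | h
            · -- v = x
              rw [hv] at h
              split_ifs at h with hqA
              · exact hxB (h ▸ hq')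
              · have : q' = p₀ :=
                  hinj q' (Finset.mem_sdiff.2 ⟨hq', hqA⟩) p₀ hp₀SA (by rw [h, hmp₀])
                exact hpq (hpp.trans this.symm)
            · obtain ⟨hne, hBmem⟩ := Finset.mem_erase.1 h
              rw [hv] at hne hBmem
              split_ifs at hne hBmem with hqA
              · exact hne rfl
              · exact (Finset.mem_sdiff.1 (hmap q' (Finset.mem_sdiff.2 ⟨hq', hqA⟩))).2 hBmem
          · rw [if_neg hpp]
            obtain ⟨hmA, hmB⟩ := Finset.mem_sdiff.1 (hmap p hpSA)
            refine Finset.mem_sdiff.2 ⟨hmA, fun hmem => ?_⟩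
            rcases Finset.mem_insert.1 hmem with h | h
            · exact hpp (hinj p hpSA p₀ hp₀SA (by rw [h, hmp₀]))
            · exact hmB (Finset.mem_of_mem_erase h)
        have hm'inj : ∀ p ∈ (CB \ CA).erase q', ∀ r ∈ (CB \ CA).erase q',
            (fun p => if p = p₀ then v else m p) p = (fun p => if p = p₀ then v else m p) r
              → p = r := by
          intro p hp r hr heq
          obtain ⟨hpq, hpSA⟩ := Finset.mem_erase.1 hp
          obtain ⟨hrq, hrSA⟩ := Finset.mem_erase.1 hr
          simp only at heq
          have cross : ∀ a, a ∈ CB \ CA → a ≠ q' → v ≠ m a := by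
            intro a haSA haq hcon
            rw [hv] at hcon
            obtain ⟨hmA, hmB⟩ := Finset.mem_sdiff.1 (hmap a haSA)
            split_ifs at hcon with h
            · exact hmB (hcon ▸ hq')
            · exact haq (hinj q' (Finset.mem_sdiff.2 ⟨hq', h⟩) a haSA hcon).symm
          split_ifs at heq with hpp hrr hrr
          · rw [hpp, hrr]
          · exact absurd heq (cross r hrSA hrq)
          · exact absurd heq.symm (cross p hpSA hpq)
          · exact hinj p hpSA r hrSA heq
        have hIH := ih (M x) hMx0 hMx1 (x :: hist) CA (insert x (CB.erase q')) hCA hCB'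
          (fun p => if p = p₀ then v else m p) (hSA' ▸ hm') (hSA' ▸ hm'inj)
        rw [hSA'] at hIH
        -- bound the new potential
        have hpot : ∑ p ∈ (CB \ CA).erase q',
            abar M p (if p = p₀ then v else m p) (M x)
            ≤ 1 + ∑ p ∈ (CB \ CA).erase p₀, alphaProb M p (m p) x := by
          have e1 : ∀ p ∈ (CB \ CA).erase q',
              abar M p (if p = p₀ then v else m p) (M x)
                = alphaProb M p (if p = p₀ then v else m p) x :=
            fun p _ => abar_Mx hM _ _ _
          rw [Finset.sum_congr rfl e1]
          have e2 : ∑ p ∈ (CB \ CA).erase q', alphaProb M p (if p = p₀ then v else m p) x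
              ≤ ∑ p ∈ (CB \ CA).erase q',
                  (if p = p₀ then 1 else alphaProb M p (m p) x) := by
            apply Finset.sum_le_sum
            intro p hp
            by_cases hpp : p = p₀
            · rw [if_pos hpp, if_pos hpp]; exact alphaProb_le_one hM p v x
            · rw [if_neg hpp, if_neg hpp]
          have e3 : ∑ p ∈ (CB \ CA).erase q',
                (if p = p₀ then 1 else alphaProb M p (m p) x)
              ≤ ∑ p ∈ CB \ CA, (if p = p₀ then 1 else alphaProb M p (m p) x) := by
            apply Finset.sum_le_sum_of_subset_of_nonneg (Finset.erase_subset _ _)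
            intro p _ _
            split_ifs
            · exact zero_le_one
            · exact alphaProb_nonneg hM p (m p) x
          have e4 : ∑ p ∈ CB \ CA, (if p = p₀ then 1 else alphaProb M p (m p) x)
              = 1 + ∑ p ∈ (CB \ CA).erase p₀, alphaProb M p (m p) x := by
            rw [← Finset.add_sum_erase _ _ hp₀SA, if_pos rfl]
            congr 1
            apply Finset.sum_congr rfl
            intro p hp
            rw [if_neg (Finset.mem_erase.1 hp).1]
          linarith
        have := mul_le_mul_of_nonneg_left hpot hc0.le
        linarith
      · -- A misses, B hits : x ∈ CB \ CA
        rw [if_neg hxA, if_pos hxB]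
        have hxSA : x ∈ CB \ CA := Finset.mem_sdiff.2 ⟨hxB, hxA⟩
        obtain ⟨hq₁A, hq₁B⟩ := Finset.mem_sdiff.1 (hmap x hxSA)
        have hSφ : ∑ p ∈ CB \ CA,
              (if x = m p then 0 else if x = p then 1 else alphaProb M p (m p) x)
            = 1 + ∑ p ∈ (CB \ CA).erase x, alphaProb M p (m p) x := by
          rw [← Finset.add_sum_erase _ _ hxSA,
            if_neg (fun h : x = m x => hxA (h ▸ hq₁A)), if_pos rfl]
          congr 1
          apply Finset.sum_congr rfl
          intro p hp
          obtain ⟨hpne, hpSA⟩ := Finset.mem_erase.1 hp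
          obtain ⟨hmA, _⟩ := Finset.mem_sdiff.1 (hmap p hpSA)
          rw [if_neg (fun h : x = m p => hxA (h ▸ hmA)), if_neg (fun h : x = p => hpne h.symm)]
        have hhyp : ∑ p' ∈ CA, A (x :: hist) CA p' * alphaProb M p' (m x) x ≤ 1 - 1 / c :=
          hyp_bound hA hist hCA hxA hq₁A
        have hper : ∀ p' ∈ CA, runAux M A T (M x) (x :: hist) (insert x (CA.erase p'))
            ≤ c * runAux M B T (M x) (x :: hist) CB
              + c * ∑ p ∈ (CB \ CA).erase x, alphaProb M p (m p) x
              + c * alphaProb M p' (m x) x := by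
          intro p' hp'
          have hCA' : (insert x (CA.erase p')).card = k := by
            rw [card_insert_erase hxA hp']; exact hCA
          have hxq : x ∈ CB → x = x := fun _ => rfl
          have hCBeq : insert x (CB.erase x) = CB := Finset.insert_erase hxB
          have hmap'' := helper_map hmap hinj hxA hp' hxB hxq
          have hinj'' := helper_inj hmap hinj hxA hp' hxB hxq
          have hsum'' := helper_sum hM hmap hinj hxA hp' hxB hxq
          rw [hCBeq] at hmap'' hinj'' hsum''
          have hIH := ih (M x) hMx0 hMx1 (x :: hist) (insert x (CA.erase p')) CB hCA' hCB
            (fun p => if p = p' ∨ m p = p' then (if x ∈ CA then x else m x) else m p)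
            hmap'' hinj''
          have e1 : ∀ p ∈ CB \ insert x (CA.erase p'),
              abar M p (if p = p' ∨ m p = p' then (if x ∈ CA then x else m x) else m p) (M x)
                = alphaProb M p
                    (if p = p' ∨ m p = p' then (if x ∈ CA then x else m x) else m p) x :=
            fun p _ => abar_Mx hM _ _ _
          rw [Finset.sum_congr rfl e1] at hIH
          have hvx : (if x ∈ CA then x else m x) = m x := if_neg hxA
          rw [hvx] at hsum'' hIH
          have h2 := mul_le_mul_of_nonneg_left hsum'' hc0.le
          have h3 : c * (∑ p ∈ (CB \ CA).erase x, alphaProb M p (m p) x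
              + alphaProb M p' (m x) x)
              = c * ∑ p ∈ (CB \ CA).erase x, alphaProb M p (m p) x
                + c * alphaProb M p' (m x) x := mul_add c _ _
          linarith
        rw [hSφ]
        have hle : ∑ p' ∈ CA, A (x :: hist) CA p' *
              runAux M A T (M x) (x :: hist) (insert x (CA.erase p'))
            ≤ ∑ p' ∈ CA, A (x :: hist) CA p' *
              (c * runAux M B T (M x) (x :: hist) CB
                + c * ∑ p ∈ (CB \ CA).erase x, alphaProb M p (m p) x
                + c * alphaProb M p' (m x) x) :=
          Finset.sum_le_sum (fun p' hp' =>
            mul_le_mul_of_nonneg_left (hper p' hp') (hApol.1 p'))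
        have hexp : ∑ p' ∈ CA, A (x :: hist) CA p' *
              (c * runAux M B T (M x) (x :: hist) CB
                + c * ∑ p ∈ (CB \ CA).erase x, alphaProb M p (m p) x
                + c * alphaProb M p' (m x) x)
            = (c * runAux M B T (M x) (x :: hist) CB
                + c * ∑ p ∈ (CB \ CA).erase x, alphaProb M p (m p) x)
              + c * ∑ p' ∈ CA, A (x :: hist) CA p' * alphaProb M p' (m x) x := by
          rw [Finset.sum_congr rfl (fun p' (_ : p' ∈ CA) => by ring :
            ∀ p' ∈ CA, A (x :: hist) CA p' *
              (c * runAux M B T (M x) (x :: hist) CB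
                + c * ∑ p ∈ (CB \ CA).erase x, alphaProb M p (m p) x
                + c * alphaProb M p' (m x) x)
              = A (x :: hist) CA p' *
                  (c * runAux M B T (M x) (x :: hist) CB
                    + c * ∑ p ∈ (CB \ CA).erase x, alphaProb M p (m p) x)
                + c * (A (x :: hist) CA p' * alphaProb M p' (m x) x))]
          rw [Finset.sum_add_distrib, ← Finset.sum_mul, hApol.2.2, one_mul, ← Finset.mul_sum]
        have hfinal := mul_le_mul_of_nonneg_left hhyp hc0.le
        have hcc : c * (1 - 1 / c) = c - 1 := by field_simp
        rw [hcc] at hfinal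
        linarith
      · -- both miss
        rw [if_neg hxA, if_neg hxB]
        have hSφ : ∑ p ∈ CB \ CA,
              (if x = m p then 0 else if x = p then 1 else alphaProb M p (m p) x)
            = ∑ p ∈ CB \ CA, alphaProb M p (m p) x := by
          apply Finset.sum_congr rfl
          intro p hp
          obtain ⟨hpB, _⟩ := Finset.mem_sdiff.1 hp
          obtain ⟨hmA, _⟩ := Finset.mem_sdiff.1 (hmap p hp)
          rw [if_neg (fun h : x = m p => hxA (h ▸ hmA)), if_neg (fun h : x = p => hxB (h ▸ hpB))]
        rw [hSφ]
        suffices h : ∀ q' ∈ CB, 1 + ∑ p' ∈ CA, A (x :: hist) CA p' *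
              runAux M A T (M x) (x :: hist) (insert x (CA.erase p'))
            ≤ c + c * runAux M B T (M x) (x :: hist) (insert x (CB.erase q'))
              + c * ∑ p ∈ CB \ CA, alphaProb M p (m p) x by
          have hstep : 1 + ∑ p' ∈ CA, A (x :: hist) CA p' *
                runAux M A T (M x) (x :: hist) (insert x (CA.erase p'))
              = ∑ q' ∈ CB, B (x :: hist) CB q' * (1 + ∑ p' ∈ CA, A (x :: hist) CA p' *
                  runAux M A T (M x) (x :: hist) (insert x (CA.erase p'))) := by
            rw [← Finset.sum_mul, hBpol.2.2, one_mul]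
          rw [hstep]
          have hle := Finset.sum_le_sum (fun q' hq' =>
            mul_le_mul_of_nonneg_left (h q' hq') (hBpol.1 q'))
          refine le_trans hle (le_of_eq ?_)
          rw [Finset.sum_congr rfl (fun q' (_ : q' ∈ CB) => by ring :
            ∀ q' ∈ CB, B (x :: hist) CB q' *
              (c + c * runAux M B T (M x) (x :: hist) (insert x (CB.erase q'))
                + c * ∑ p ∈ CB \ CA, alphaProb M p (m p) x)
              = B (x :: hist) CB q' * (c + c * ∑ p ∈ CB \ CA, alphaProb M p (m p) x)
                + c * (B (x :: hist) CB q' *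
                    runAux M B T (M x) (x :: hist) (insert x (CB.erase q'))))]
          rw [Finset.sum_add_distrib, ← Finset.sum_mul, hBpol.2.2, one_mul, ← Finset.mul_sum]
          ring
        intro q' hq'
        have hxq : x ∈ CB → x = q' := fun h => absurd h hxB
        have hCB' : (insert x (CB.erase q')).card = k := by
          rw [card_insert_erase hxB hq']; exact hCB
        set w := if q' ∈ CA then q' else m q' with hw
        have hwA : w ∈ CA := helper_w_mem hq' hmap
        have hhyp : ∑ p' ∈ CA, A (x :: hist) CA p' * alphaProb M p' w x ≤ 1 - 1 / c :=
          hyp_bound hA hist hCA hxA hwA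
        have hper : ∀ p' ∈ CA, runAux M A T (M x) (x :: hist) (insert x (CA.erase p'))
            ≤ c * runAux M B T (M x) (x :: hist) (insert x (CB.erase q'))
              + c * ∑ p ∈ CB \ CA, alphaProb M p (m p) x
              + c * alphaProb M p' w x := by
          intro p' hp'
          have hCA' : (insert x (CA.erase p')).card = k := by
            rw [card_insert_erase hxA hp']; exact hCA
          have hmap'' := helper_map hmap hinj hxA hp' hq' hxq
          have hinj'' := helper_inj hmap hinj hxA hp' hq' hxq
          have hsum'' := helper_sum hM hmap hinj hxA hp' hq' hxq
          have hIH := ih (M x) hMx0 hMx1 (x :: hist) (insert x (CA.erase p'))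
            (insert x (CB.erase q')) hCA' hCB'
            (fun p => if p = p' ∨ m p = p' then (if q' ∈ CA then q' else m q') else m p)
            hmap'' hinj''
          have e1 : ∀ p ∈ insert x (CB.erase q') \ insert x (CA.erase p'),
              abar M p (if p = p' ∨ m p = p' then (if q' ∈ CA then q' else m q') else m p) (M x)
                = alphaProb M p
                    (if p = p' ∨ m p = p' then (if q' ∈ CA then q' else m q') else m p) x :=
            fun p _ => abar_Mx hM _ _ _
          rw [Finset.sum_congr rfl e1] at hIH
          have hsub : ∑ p ∈ (CB \ CA).erase q', alphaProb M p (m p) x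
              ≤ ∑ p ∈ CB \ CA, alphaProb M p (m p) x := by
            apply Finset.sum_le_sum_of_subset_of_nonneg (Finset.erase_subset _ _)
            exact fun p _ _ => alphaProb_nonneg hM p (m p) x
          have hcomb : ∑ p ∈ insert x (CB.erase q') \ insert x (CA.erase p'),
              alphaProb M p
                (if p = p' ∨ m p = p' then (if q' ∈ CA then q' else m q') else m p) x
              ≤ ∑ p ∈ CB \ CA, alphaProb M p (m p) x + alphaProb M p' w x := by
            refine le_trans hsum'' ?_
            rw [hw]
            linarith
          have := mul_le_mul_of_nonneg_left hcomb hc0.le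
          calc runAux M A T (M x) (x :: hist) (insert x (CA.erase p'))
              ≤ c * runAux M B T (M x) (x :: hist) (insert x (CB.erase q'))
                + c * ∑ p ∈ insert x (CB.erase q') \ insert x (CA.erase p'),
                    alphaProb M p
                      (if p = p' ∨ m p = p' then (if q' ∈ CA then q' else m q') else m p) x :=
                hIH
            _ ≤ c * runAux M B T (M x) (x :: hist) (insert x (CB.erase q'))
                + c * (∑ p ∈ CB \ CA, alphaProb M p (m p) x + alphaProb M p' w x) := by
                linarith
            _ = _ := by ring
        have hle : ∑ p' ∈ CA, A (x :: hist) CA p' *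
              runAux M A T (M x) (x :: hist) (insert x (CA.erase p'))
            ≤ ∑ p' ∈ CA, A (x :: hist) CA p' *
              (c * runAux M B T (M x) (x :: hist) (insert x (CB.erase q'))
                + c * ∑ p ∈ CB \ CA, alphaProb M p (m p) x
                + c * alphaProb M p' w x) :=
          Finset.sum_le_sum (fun p' hp' =>
            mul_le_mul_of_nonneg_left (hper p' hp') (hApol.1 p'))
        have hexp : ∑ p' ∈ CA, A (x :: hist) CA p' *
              (c * runAux M B T (M x) (x :: hist) (insert x (CB.erase q'))
                + c * ∑ p ∈ CB \ CA, alphaProb M p (m p) x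
                + c * alphaProb M p' w x)
            = (c * runAux M B T (M x) (x :: hist) (insert x (CB.erase q'))
                + c * ∑ p ∈ CB \ CA, alphaProb M p (m p) x)
              + c * ∑ p' ∈ CA, A (x :: hist) CA p' * alphaProb M p' w x := by
          rw [Finset.sum_congr rfl (fun p' (_ : p' ∈ CA) => by ring :
            ∀ p' ∈ CA, A (x :: hist) CA p' *
              (c * runAux M B T (M x) (x :: hist) (insert x (CB.erase q'))
                + c * ∑ p ∈ CB \ CA, alphaProb M p (m p) x
                + c * alphaProb M p' w x)
              = A (x :: hist) CA p' *
                  (c * runAux M B T (M x) (x :: hist) (insert x (CB.erase q'))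
                    + c * ∑ p ∈ CB \ CA, alphaProb M p (m p) x)
                + c * (A (x :: hist) CA p' * alphaProb M p' w x))]
          rw [Finset.sum_add_distrib, ← Finset.sum_mul, hApol.2.2, one_mul, ← Finset.mul_sum]
        have hfinal := mul_le_mul_of_nonneg_left hhyp hc0.le
        have hcc : c * (1 - 1 / c) = c - 1 := by field_simp
        rw [hcc] at hfinal
        linarith
    -- assemble the step
    rw [runAux, runAux]
    have hswap : ∑ p ∈ CB \ CA, abar M p (m p) dist
        = ∑ x, dist x * ∑ p ∈ CB \ CA,
            (if x = m p then 0 else if x = p then 1 else alphaProb M p (m p) x) := by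
      unfold abar
      rw [Finset.sum_comm]
      apply Finset.sum_congr rfl
      intro x _
      rw [Finset.mul_sum]
    rw [hswap]
    have hrhs : c * (∑ x, dist x *
          (if x ∈ CB then runAux M B T (M x) (x :: hist) CB
           else 1 + ∑ p ∈ CB, B (x :: hist) CB p *
              runAux M B T (M x) (x :: hist) (insert x (CB.erase p))))
        + c * ∑ x, dist x * ∑ p ∈ CB \ CA,
            (if x = m p then 0 else if x = p then 1 else alphaProb M p (m p) x)
        = ∑ x, dist x *
            (c * (if x ∈ CB then runAux M B T (M x) (x :: hist) CB
              else 1 + ∑ p ∈ CB, B (x :: hist) CB p *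
                runAux M B T (M x) (x :: hist) (insert x (CB.erase p)))
             + c * ∑ p ∈ CB \ CA,
                 (if x = m p then 0 else if x = p then 1 else alphaProb M p (m p) x)) := by
      rw [Finset.mul_sum, Finset.mul_sum, ← Finset.sum_add_distrib]
      apply Finset.sum_congr rfl
      intro x _
      ring
    rw [hrhs]
    exact Finset.sum_le_sum (fun x _ => mul_le_mul_of_nonneg_left (key x) (hd0 x))

end Main
/-- **Theorem (tightened charging-scheme analysis).**  Every online paging policy `A`
satisfying the eviction hypothesis with parameter `c ≥ 1` is `c`-competitive: for every
online paging policy `B` started from the same initial cache and every horizon `T`,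
`E[cost(A, T)] ≤ c · E[cost(B, T)]`. -/
theorem eviction_hypothesis_c_competitive {n k : ℕ} (hkn : k < n)
    (M : Fin n → Fin n → ℝ) (hM : IsStochastic M)
    (init : Fin n → ℝ) (hinit : IsDist init)
    (C₀ : Finset (Fin n)) (hC₀ : C₀.card = k)
    (c : ℝ) (hc : 1 ≤ c)
    (A : Policy n) (hA : EvictionHyp k M A c)
    (B : Policy n) (hB : IsPolicy k B) (T : ℕ) :
    expCost M init A C₀ T ≤ c * expCost M init B C₀ T := by
  have h := main_lemma hM hc hA hB T init hinit.1 hinit.2 [] C₀ C₀ hC₀ hC₀ id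
    (fun p hp => by simp at hp) (fun p hp => by simp at hp)
  simpa [expCost, Finset.sdiff_self] using h
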